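/- Suppose the learning algorithm A is OAROS with rate ε1, and suppose there is a monotonically decreasing function ε2 : ℕ → ℝ such that for every n ≥ 1, E_{T̃ ~ D^{n+1}} [ L_T(A_n(T)) − L_{T̃}(A_{n+1}(T̃)) ] ≤ ε2(n), where T denotes the tuple of the first n entries of T̃. Then for every n ≥ 1, E_{T~D^n} E_{x'~D} [ (1/n) Σ_{i=1}^n ℓ(A_n(T^{i←x'}), T_i) − L_D(A_{n+1}(T ⊕ x')) ] ≤ 2·ε1(n) + ε2(n). -/

import Mathlib

open MeasureTheory

noncomputable section

/-- The i.i.d. sample measure of size `n` drawn from `D`. -/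
def iid {Z : Type*} [MeasurableSpace Z] (D : Measure Z) (n : ℕ) :
    Measure (Fin n → Z) :=
  Measure.pi fun _ => D

/-- The learning algorithm is symmetric: invariant under permutations of the
entries of its input tuple. -/
def IsSymmetricAlg {Z H : Type*} (A : ∀ k : ℕ, (Fin k → Z) → H) : Prop :=
  ∀ (k : ℕ) (σ : Equiv.Perm (Fin k)) (S : Fin k → Z), A k (S ∘ σ) = A k S

/-- For each `k`, the map `(S, z) ↦ ℓ(A k S, z)` is measurable and bounded. -/
def MeasBddAlg {Z H : Type*} [MeasurableSpace Z] (ℓ : H → Z → ℝ)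
    (A : ∀ k : ℕ, (Fin k → Z) → H) : Prop :=
  ∀ k : ℕ, Measurable (fun p : (Fin k → Z) × Z => ℓ (A k p.1) p.2) ∧
    ∃ C : ℝ, ∀ (S : Fin k → Z) (z : Z), ℓ (A k S) z ≤ C

/-- On-Average-Replace-One-Stability with rate `ε1`. -/
def OAROS {Z H : Type*} [MeasurableSpace Z] (ℓ : H → Z → ℝ)
    (A : ∀ k : ℕ, (Fin k → Z) → H) (ε1 : ℕ → ℝ) : Prop :=
  Antitone ε1 ∧
  ∀ (D : Measure Z), IsProbabilityMeasure D → ∀ n : ℕ, 1 ≤ n →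
    ∫ T, ∫ x',
        (n : ℝ)⁻¹ * ∑ i : Fin n,
          |ℓ (A n T) (T i) - ℓ (A n (Function.update T i x')) (T i)|
      ∂D ∂(iid D n) ≤ ε1 n

/-!
Since `T̃ = T ⊕ x'` has law `D^{n+1}`, the quantity to bound telescopes through the expected
training risks `E L_T(A_n T)` and `E L_T̃(A_{n+1} T̃)`. The first step costs at most `ε1 n` by stability at `n`,
the second at most `ε2 n` by hypothesis. For the third, exchanging the fresh point with the
`j`-th sample point preserves the law `D^{n+1} ⊗ D`, so the expected true risk of `A_{n+1}`
equals its expected replace-one risk, and stability at `n + 1` bounds the gap by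
`ε1 (n + 1) ≤ ε1 n`.
-/

section Exchange

variable {ι Z : Type*} [DecidableEq ι] [MeasurableSpace Z]

/-- The transposition of the coordinates `some j` and `none` of `Option ι → Z ≃ᵐ (ι → Z) × Z`,
which makes measure preservation immediate. -/
def replaceOneEquiv (j : ι) : (ι → Z) × Z ≃ᵐ (ι → Z) × Z :=
  (MeasurableEquiv.piOptionEquivProd fun _ => Z).symm.trans <|
    (MeasurableEquiv.piCongrLeft (fun _ => Z) (Equiv.swap (some j) none)).symm.trans
      (MeasurableEquiv.piOptionEquivProd fun _ => Z)

theorem replaceOneEquiv_apply (j : ι) (q : (ι → Z) × Z) :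
    replaceOneEquiv j q = (Function.update q.1 j q.2, q.1 j) := by
  have hsymm : (MeasurableEquiv.piOptionEquivProd (fun _ => Z)).symm q =
      fun o => Option.elim o q.2 q.1 := by
    funext o; cases o <;> rfl
  change (fun i => (MeasurableEquiv.piOptionEquivProd (fun _ => Z)).symm q
      (Equiv.swap (some j) none (some i)),
    (MeasurableEquiv.piOptionEquivProd (fun _ => Z)).symm q (Equiv.swap (some j) none none)) = _
  rw [hsymm]
  ext i
  · by_cases h : i = j
    · simp [h]
    · simp [h, Equiv.swap_apply_of_ne_of_ne]
  · simp

variable [Fintype ι] (μ : Measure Z) [SigmaFinite μ]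

theorem measurePreserving_replaceOneEquiv (j : ι) :
    MeasurePreserving (replaceOneEquiv j) ((Measure.pi fun _ : ι => μ).prod μ)
      ((Measure.pi fun _ : ι => μ).prod μ) := by
  have h : MeasurePreserving (MeasurableEquiv.piOptionEquivProd fun _ : Option ι => Z).symm
      ((Measure.pi fun _ : ι => μ).prod μ) (Measure.pi fun _ : Option ι => μ) :=
    ⟨MeasurableEquiv.measurable _, Measure.pi_map_piOptionEquivProd fun _ => μ⟩
  exact h.symm.comp ((measurePreserving_piCongrLeft (fun _ => μ) _).symm.comp h)

theorem integral_comp_update_swap {E : Type*} [NormedAddCommGroup E] [NormedSpace ℝ E]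
    (j : ι) (f : (ι → Z) → Z → E) :
    ∫ q, f (Function.update q.1 j q.2) (q.1 j) ∂(Measure.pi fun _ : ι => μ).prod μ =
      ∫ q, f q.1 q.2 ∂(Measure.pi fun _ : ι => μ).prod μ := by
  simpa only [replaceOneEquiv_apply] using
    (measurePreserving_replaceOneEquiv μ j).integral_comp' (fun q => f q.1 q.2)

end Exchange

section Sample

variable {Z : Type*} [MeasurableSpace Z] (D : Measure Z)

instance [IsProbabilityMeasure D] (n : ℕ) : IsProbabilityMeasure (iid D n) := by
  unfold iid; infer_instance

instance [SigmaFinite D] (n : ℕ) : SigmaFinite (iid D n) := by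
  unfold iid; infer_instance

def snocEquiv (n : ℕ) : (Fin n → Z) × Z ≃ᵐ (Fin (n + 1) → Z) :=
  MeasurableEquiv.prodComm.trans (MeasurableEquiv.piFinSuccAbove (fun _ => Z) (Fin.last n)).symm

theorem coe_snocEquiv (n : ℕ) :
    ⇑(snocEquiv n) = fun q : (Fin n → Z) × Z => Fin.snoc q.1 q.2 := by
  funext q
  simp only [snocEquiv, MeasurableEquiv.trans_apply, MeasurableEquiv.piFinSuccAbove_symm_apply,
    Fin.insertNthEquiv_last]
  rfl

theorem measurePreserving_snocEquiv [SigmaFinite D] (n : ℕ) :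
    MeasurePreserving (snocEquiv n) ((iid D n).prod D) (iid D (n + 1)) :=
  (measurePreserving_piFinSuccAbove (fun _ => D) (Fin.last n)).symm.comp
    Measure.measurePreserving_swap

variable {E : Type*} [NormedAddCommGroup E] [NormedSpace ℝ E]

theorem integral_comp_snoc [SigmaFinite D] {n : ℕ} (f : (Fin (n + 1) → Z) → E) :
    ∫ q, f (Fin.snoc q.1 q.2) ∂(iid D n).prod D = ∫ T, f T ∂iid D (n + 1) := by
  simpa only [coe_snocEquiv] using (measurePreserving_snocEquiv D n).integral_comp' f

theorem integral_comp_init [IsProbabilityMeasure D] {n : ℕ} (f : (Fin n → Z) → E) :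
    ∫ T, f (Fin.init T) ∂iid D (n + 1) = ∫ T, f T ∂iid D n := by
  rw [← integral_comp_snoc]
  simp [Fin.init_snoc, integral_fun_fst]

end Sample

section Risk

variable {Z H : Type*} (ℓ : H → Z → ℝ) (A : ∀ k : ℕ, (Fin k → Z) → H)

def empiricalRisk (k : ℕ) (S : Fin k → Z) : ℝ :=
  (k : ℝ)⁻¹ * ∑ i, ℓ (A k S) (S i)

def replaceOneRisk (k : ℕ) (S : Fin k → Z) (x : Z) : ℝ :=
  (k : ℝ)⁻¹ * ∑ i, ℓ (A k (Function.update S i x)) (S i)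

def trueRisk [MeasurableSpace Z] (D : Measure Z) (h : H) : ℝ :=
  ∫ y, ℓ h y ∂D

def replaceOneDeviation (k : ℕ) (S : Fin k → Z) (x : Z) : ℝ :=
  (k : ℝ)⁻¹ * ∑ i, |ℓ (A k S) (S i) - ℓ (A k (Function.update S i x)) (S i)|

theorem abs_replaceOneRisk_sub_empiricalRisk_le (k : ℕ) (S : Fin k → Z) (x : Z) :
    |replaceOneRisk ℓ A k S x - empiricalRisk ℓ A k S| ≤ replaceOneDeviation ℓ A k S x := by
  rw [replaceOneRisk, empiricalRisk, replaceOneDeviation, ← mul_sub, ← Finset.sum_sub_distrib,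
    abs_mul, abs_of_nonneg (by positivity)]
  gcongr
  exact (Finset.abs_sum_le_sum_abs _ _).trans_eq (Finset.sum_congr rfl fun i _ => abs_sub_comm _ _)

variable {ℓ A} [MeasurableSpace Z] {α : Type*} [MeasurableSpace α] {μ : Measure α}
  [IsFiniteMeasure μ]

theorem integrable_loss_comp (hℓ : ∀ h z, 0 ≤ ℓ h z) (hmb : MeasBddAlg ℓ A) {k : ℕ}
    {φ : α → (Fin k → Z) × Z} (hφ : Measurable φ) :
    Integrable (fun a => ℓ (A k (φ a).1) (φ a).2) μ := by
  obtain ⟨hmeas, C, hC⟩ := hmb k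
  refine .of_bound (hmeas.comp hφ).aestronglyMeasurable C (ae_of_all _ fun a => ?_)
  rw [Real.norm_of_nonneg (hℓ _ _)]
  exact hC _ _

theorem integrable_empiricalRisk_comp (hℓ : ∀ h z, 0 ≤ ℓ h z) (hmb : MeasBddAlg ℓ A) {k : ℕ}
    {S : α → Fin k → Z} (hS : Measurable S) :
    Integrable (fun a => empiricalRisk ℓ A k (S a)) μ :=
  (integrable_finsetSum _ fun i _ =>
    integrable_loss_comp hℓ hmb (hS.prodMk ((measurable_pi_apply i).comp hS))).const_mul _

theorem integrable_update_loss (hℓ : ∀ h z, 0 ≤ ℓ h z) (hmb : MeasBddAlg ℓ A) {k : ℕ}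
    {μ : Measure ((Fin k → Z) × Z)} [IsFiniteMeasure μ] (i : Fin k) :
    Integrable (fun q => ℓ (A k (Function.update q.1 i q.2)) (q.1 i)) μ :=
  integrable_loss_comp hℓ hmb
    (measurable_update'.prodMk ((measurable_pi_apply i).comp measurable_fst))

theorem integrable_replaceOneRisk (hℓ : ∀ h z, 0 ≤ ℓ h z) (hmb : MeasBddAlg ℓ A) {k : ℕ}
    {μ : Measure ((Fin k → Z) × Z)} [IsFiniteMeasure μ] :
    Integrable (fun q => replaceOneRisk ℓ A k q.1 q.2) μ :=
  (integrable_finsetSum _ fun i _ => integrable_update_loss hℓ hmb i).const_mul _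

theorem integrable_replaceOneDeviation (hℓ : ∀ h z, 0 ≤ ℓ h z) (hmb : MeasBddAlg ℓ A) {k : ℕ}
    {μ : Measure ((Fin k → Z) × Z)} [IsFiniteMeasure μ] :
    Integrable (fun q => replaceOneDeviation ℓ A k q.1 q.2) μ :=
  (integrable_finsetSum _ fun i _ =>
    ((integrable_loss_comp hℓ hmb (measurable_fst.prodMk
      ((measurable_pi_apply i).comp measurable_fst))).sub
      (integrable_update_loss hℓ hmb i)).abs).const_mul _

theorem integrable_trueRisk_comp (hℓ : ∀ h z, 0 ≤ ℓ h z) (hmb : MeasBddAlg ℓ A)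
    [SFinite μ] (D : Measure Z) [IsFiniteMeasure D] {k : ℕ} {S : α → Fin k → Z}
    (hS : Measurable S) :
    Integrable (fun a => trueRisk ℓ D (A k (S a))) μ :=
  (integrable_loss_comp (μ := μ.prod D) hℓ hmb
    ((hS.comp measurable_fst).prodMk measurable_snd)).integral_prod_left

variable (D : Measure Z) [IsProbabilityMeasure D]

theorem abs_integral_replaceOneRisk_sub_le {ε1 : ℕ → ℝ} (hℓ : ∀ h z, 0 ≤ ℓ h z)
    (hmb : MeasBddAlg ℓ A) (hst : OAROS ℓ A ε1) {k : ℕ} (hk : 1 ≤ k) :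
    |∫ q, replaceOneRisk ℓ A k q.1 q.2 ∂(iid D k).prod D - ∫ T, empiricalRisk ℓ A k T ∂iid D k|
      ≤ ε1 k := by
  have hemp : ∫ T, empiricalRisk ℓ A k T ∂iid D k =
      ∫ q, empiricalRisk ℓ A k q.1 ∂(iid D k).prod D := by
    simp [integral_fun_fst]
  have hdev := integrable_replaceOneDeviation (μ := (iid D k).prod D) hℓ hmb
  calc _ = ‖∫ q, (replaceOneRisk ℓ A k q.1 q.2 - empiricalRisk ℓ A k q.1) ∂(iid D k).prod D‖ := by
        rw [hemp, integral_sub (integrable_replaceOneRisk hℓ hmb)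
          (integrable_empiricalRisk_comp hℓ hmb measurable_fst), Real.norm_eq_abs]
    _ ≤ ∫ q, replaceOneDeviation ℓ A k q.1 q.2 ∂(iid D k).prod D :=
        norm_integral_le_of_norm_le hdev
          (ae_of_all _ fun q => abs_replaceOneRisk_sub_empiricalRisk_le ℓ A k q.1 q.2)
    _ = ∫ T, ∫ x, replaceOneDeviation ℓ A k T x ∂D ∂iid D k := (integral_integral hdev).symm
    _ ≤ ε1 k := hst.2 D inferInstance k hk

theorem integral_trueRisk_eq_integral_replaceOneRisk (hℓ : ∀ h z, 0 ≤ ℓ h z)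
    (hmb : MeasBddAlg ℓ A) {k : ℕ} (hk : k ≠ 0) :
    ∫ T, trueRisk ℓ D (A k T) ∂iid D k = ∫ q, replaceOneRisk ℓ A k q.1 q.2 ∂(iid D k).prod D := by
  have hexch (i : Fin k) :
      ∫ q, ℓ (A k (Function.update q.1 i q.2)) (q.1 i) ∂(iid D k).prod D =
        ∫ q, ℓ (A k q.1) q.2 ∂(iid D k).prod D :=
    integral_comp_update_swap D i fun T x => ℓ (A k T) x
  calc ∫ T, trueRisk ℓ D (A k T) ∂iid D k = ∫ q, ℓ (A k q.1) q.2 ∂(iid D k).prod D :=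
        integral_integral (integrable_loss_comp hℓ hmb measurable_id)
    _ = (k : ℝ)⁻¹ * ∑ i, ∫ q, ℓ (A k (Function.update q.1 i q.2)) (q.1 i) ∂(iid D k).prod D := by
        simp [hexch, hk]
    _ = ∫ q, replaceOneRisk ℓ A k q.1 q.2 ∂(iid D k).prod D := by
        rw [← integral_finsetSum _ fun i _ => integrable_update_loss hℓ hmb i,
          ← integral_const_mul]
        rfl

end Risk

theorem stmt_7_general {Z H : Type*} [MeasurableSpace Z] (ℓ : H → Z → ℝ)
    (A : ∀ k : ℕ, (Fin k → Z) → H) (ε1 ε2 : ℕ → ℝ)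
    (hℓ : ∀ (h : H) (z : Z), 0 ≤ ℓ h z)
    (hmb : MeasBddAlg ℓ A)
    (hst : OAROS ℓ A ε1)
    (D : Measure Z) [IsProbabilityMeasure D]
    (herm : ∀ n : ℕ, 1 ≤ n →
      ∫ T',
          ((n : ℝ)⁻¹ * ∑ i : Fin n, ℓ (A n (Fin.init T')) (Fin.init T' i) -
            ((n + 1 : ℕ) : ℝ)⁻¹ * ∑ i : Fin (n + 1), ℓ (A (n + 1) T') (T' i))
        ∂(iid D (n + 1)) ≤ ε2 n) :
    ∀ n : ℕ, 1 ≤ n →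
      ∫ T, ∫ x',
          ((n : ℝ)⁻¹ * ∑ i : Fin n, ℓ (A n (Function.update T i x')) (T i) -
            ∫ y, ℓ (A (n + 1) (Fin.snoc T x')) y ∂D)
        ∂D ∂(iid D n) ≤ 2 * ε1 n + ε2 n := by
  intro n hn
  have hsnoc : Measurable fun q : (Fin n → Z) × Z => (Fin.snoc q.1 q.2 : Fin (n + 1) → Z) := by
    rw [← coe_snocEquiv]; exact (snocEquiv n).measurable
  have hinit : Measurable (Fin.init : (Fin (n + 1) → Z) → Fin n → Z) :=
    measurable_pi_lambda _ fun i => measurable_pi_apply _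
  have hrisk := integrable_trueRisk_comp (μ := (iid D n).prod D) hℓ hmb D hsnoc
  have hsplit : ∫ T, ∫ x', ((n : ℝ)⁻¹ * ∑ i : Fin n, ℓ (A n (Function.update T i x')) (T i) -
        ∫ y, ℓ (A (n + 1) (Fin.snoc T x')) y ∂D) ∂D ∂(iid D n) =
      ∫ q, replaceOneRisk ℓ A n q.1 q.2 ∂(iid D n).prod D -
        ∫ T', trueRisk ℓ D (A (n + 1) T') ∂iid D (n + 1) := by
    rw [integral_integral ((integrable_replaceOneRisk hℓ hmb).sub hrisk),
      ← integral_comp_snoc D fun T' => trueRisk ℓ D (A (n + 1) T')]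
    exact integral_sub (integrable_replaceOneRisk hℓ hmb) hrisk
  have hgen : ∫ T, empiricalRisk ℓ A n T ∂iid D n -
      ∫ T', empiricalRisk ℓ A (n + 1) T' ∂iid D (n + 1) ≤ ε2 n := by
    rw [← integral_comp_init D (empiricalRisk ℓ A n), ← integral_sub
      (integrable_empiricalRisk_comp hℓ hmb hinit)
      (integrable_empiricalRisk_comp hℓ hmb measurable_id')]
    exact herm n hn
  have hstab := abs_le.mp (abs_integral_replaceOneRisk_sub_le D hℓ hmb hst hn)
  have hstab_succ := abs_le.mp (abs_integral_replaceOneRisk_sub_le D hℓ hmb hst n.succ_pos)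
  rw [← integral_trueRisk_eq_integral_replaceOneRisk D hℓ hmb n.succ_ne_zero] at hstab_succ
  linarith [hst.1 n.le_succ]

/-- OAROS stability plus ERM convergence gives the auxiliary
bound `2·ε1(n) + ε2(n)`. -/
theorem stmt_7 {Z H : Type*} [MeasurableSpace Z] (ℓ : H → Z → ℝ)
    (A : ∀ k : ℕ, (Fin k → Z) → H) (ε1 ε2 : ℕ → ℝ)
    (hℓ : ∀ (h : H) (z : Z), 0 ≤ ℓ h z)
    (hsym : IsSymmetricAlg A) (hmb : MeasBddAlg ℓ A)
    (hst : OAROS ℓ A ε1)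
    (D : Measure Z) [IsProbabilityMeasure D]
    (hε2 : Antitone ε2)
    (herm : ∀ n : ℕ, 1 ≤ n →
      ∫ T',
          ((n : ℝ)⁻¹ * ∑ i : Fin n, ℓ (A n (Fin.init T')) (Fin.init T' i) -
            ((n + 1 : ℕ) : ℝ)⁻¹ * ∑ i : Fin (n + 1), ℓ (A (n + 1) T') (T' i))
        ∂(iid D (n + 1)) ≤ ε2 n) :
    ∀ n : ℕ, 1 ≤ n →
      ∫ T, ∫ x',
          ((n : ℝ)⁻¹ * ∑ i : Fin n, ℓ (A n (Function.update T i x')) (T i) -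
            ∫ y, ℓ (A (n + 1) (Fin.snoc T x')) y ∂D)
        ∂D ∂(iid D n) ≤ 2 * ε1 n + ε2 n :=
  stmt_7_general ℓ A ε1 ε2 hℓ hmb hst D herm
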